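/- arXiv:2604.09035 — 3 statements merged into one kernel-verified Lean document; each statement's English description precedes it below -/
import Mathlib

section
/- Let σ(x) = 1/(1 + exp(−x)) denote the sigmoid function. Let A be a nonempty finite set, let π : A → ℝ satisfy π(a) ≥ 0 for all a and Σ_{a∈A} π(a) = 1, and let g : A → ℝ satisfy Σ_{a∈A} π(a)·g(a) = 0. Define Z = Σ_{a∈A} π(a)·σ(g(a)) and π^σ(a) = π(a)·σ(g(a))/Z. Then Z > 0, π^σ(a) ≥ 0 for all a, Σ_{a∈A} π^σ(a) = 1, and Σ_{a∈A} π^σ(a)·g(a) ≥ 0. -/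
/-
The tilted mean has the sign of `Σ π σ(g) g`. Replacing `σ` by `σ - σ(0)` does not change this
sum, since `g` has `π`-mean zero; then every term `π (σ(g) - σ(0)) g` is nonnegative because `σ`
is monotone.
-/

open Finset

/-- The sigmoid function `σ(x) = 1 / (1 + exp (−x))`. -/
noncomputable def sigmoid (x : ℝ) : ℝ := 1 / (1 + Real.exp (-x))

theorem sigmoid_eq_real_sigmoid : sigmoid = Real.sigmoid :=
  funext fun x => by rw [sigmoid, Real.sigmoid_def, one_div]

namespace Finset

variable {ι R : Type*} [CommRing R] [LinearOrder R] [IsStrictOrderedRing R] {s : Finset ι}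

theorem sum_mul_pos_of_sum_pos {w f : ι → R} (hw : ∀ i ∈ s, 0 ≤ w i)
    (hsum : 0 < ∑ i ∈ s, w i) (hf : ∀ i ∈ s, 0 < f i) : 0 < ∑ i ∈ s, w i * f i := by
  obtain ⟨i, hi, hwi⟩ : ∃ i ∈ s, 0 < w i :=
    exists_lt_of_sum_lt (by rwa [sum_const_zero])
  exact sum_pos' (fun j hj => mul_nonneg (hw j hj) (hf j hj).le) ⟨i, hi, mul_pos hwi (hf i hi)⟩

theorem sum_mul_comp_mul_nonneg_of_monotone {w g : ι → R} {f : R → R} (hf : Monotone f)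
    (hw : ∀ i ∈ s, 0 ≤ w i) (hg : ∑ i ∈ s, w i * g i = 0) :
    0 ≤ ∑ i ∈ s, w i * f (g i) * g i := by
  have hcenter : ∑ i ∈ s, w i * f (g i) * g i
      = ∑ i ∈ s, w i * ((f (g i) - f 0) * g i) + f 0 * ∑ i ∈ s, w i * g i := by
    rw [mul_sum, ← sum_add_distrib]
    exact sum_congr rfl fun i _ => by ring
  rw [hcenter, hg, mul_zero, add_zero]
  refine sum_nonneg fun i hi => mul_nonneg (hw i hi) ?_
  rcases le_total 0 (g i) with hpos | hneg
  · exact mul_nonneg (sub_nonneg.2 (hf hpos)) hpos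
  · exact mul_nonneg_of_nonpos_of_nonpos (sub_nonpos.2 (hf hneg)) hneg

end Finset

theorem sigmoid_tilted_policy_general
    {A : Type*} [Fintype A]
    (π : A → ℝ) (hπ : ∀ a, 0 ≤ π a) (hπsum : ∑ a, π a = 1)
    (g : A → ℝ) (hg : ∑ a, π a * g a = 0) :
    0 < (∑ a, π a * sigmoid (g a)) ∧
      (∀ a, 0 ≤ π a * sigmoid (g a) / (∑ b, π b * sigmoid (g b))) ∧
      (∑ a, π a * sigmoid (g a) / (∑ b, π b * sigmoid (g b))) = 1 ∧
      0 ≤ ∑ a, (π a * sigmoid (g a) / (∑ b, π b * sigmoid (g b))) * g a := by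
  rw [sigmoid_eq_real_sigmoid]
  have hZ : 0 < ∑ a, π a * Real.sigmoid (g a) :=
    sum_mul_pos_of_sum_pos (fun a _ => hπ a) (hπsum ▸ one_pos) fun a _ => Real.sigmoid_pos _
  refine ⟨hZ, fun a => div_nonneg (mul_nonneg (hπ a) (Real.sigmoid_nonneg _)) hZ.le,
    by rw [← sum_div, div_self hZ.ne'], ?_⟩
  have hmean : 0 ≤ ∑ a, π a * Real.sigmoid (g a) * g a :=
    sum_mul_comp_mul_nonneg_of_monotone Real.sigmoid_monotone (fun a _ => hπ a) hg
  simp_rw [div_mul_eq_mul_div, ← sum_div]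
  exact div_nonneg hmean hZ.le

/-- Sigmoid tilting of a finite probability distribution: if `π` is a
probability distribution on a nonempty finite set `A` and `g : A → ℝ` has
`π`-mean zero, then `Z = Σ_a π(a)·σ(g(a)) > 0`, the tilted distribution
`π^σ(a) = π(a)·σ(g(a))/Z` is a probability distribution, and the `π^σ`-mean
of `g` is nonnegative. -/
theorem sigmoid_tilted_policy
    {A : Type*} [Fintype A] [Nonempty A]
    (π : A → ℝ) (hπ : ∀ a, 0 ≤ π a) (hπsum : ∑ a, π a = 1)
    (g : A → ℝ) (hg : ∑ a, π a * g a = 0) :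
    0 < (∑ a, π a * sigmoid (g a)) ∧
      (∀ a, 0 ≤ π a * sigmoid (g a) / (∑ b, π b * sigmoid (g b))) ∧
      (∑ a, π a * sigmoid (g a) / (∑ b, π b * sigmoid (g b))) = 1 ∧
      0 ≤ ∑ a, (π a * sigmoid (g a) / (∑ b, π b * sigmoid (g b))) * g a :=
  sigmoid_tilted_policy_general π hπ hπsum g hg
end

section
/- Let σ(x) = 1/(1 + exp(−x)) denote the sigmoid function. Consider a finite Markov decision process: a nonempty finite state space S, a nonempty finite action space A, a transition function P : S × A × S → ℝ with P(s,a,s') ≥ 0 and Σ_{s'∈S} P(s,a,s') = 1 for all (s,a), a reward function r : S × A → ℝ, and a discount factor γ ∈ [0,1). Let π be a policy (π(s,a) ≥ 0, Σ_a π(s,a) = 1 for all s) and let V_π : S → ℝ satisfy the Bellman equation V_π(s) = Σ_a π(s,a)·( r(s,a) + γ·Σ_{s'} P(s,a,s')·V_π(s') ). Define Q_π(s,a) = r(s,a) + γ·Σ_{s'} P(s,a,s')·V_π(s'), A_π(s,a) = Q_π(s,a) − V_π(s), Z(s) = Σ_a π(s,a)·σ(A_π(s,a)), and π^σ(s,a)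 = π(s,a)·σ(A_π(s,a))/Z(s). Then π^σ is a policy, and if V' : S → ℝ satisfies the Bellman equation for π^σ, then V'(s) ≥ V_π(s) for all s ∈ S; consequently, for any initial distribution ρ : S → ℝ with ρ(s) ≥ 0 and Σ_s ρ(s) = 1, the policy values satisfy J(π^σ) = Σ_s ρ(s)·V'(s) ≥ Σ_s ρ(s)·V_π(s) = J(π). -/
open Finset

/-!
Two facts drive the argument. First, the advantage `A_π(s, ·)` has mean zero under `π(s, ·)`,
and since `σ(x) - 1/2` has the sign of `x`, reweighting by `σ(A_π)` can only raise its mean: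
`Σ_a π σ(A_π) A_π ≥ Σ_a π A_π / 2 = 0`. Second, the classical policy improvement principle:
`W = V' - V_π` satisfies `W(s) = E_{π^σ}[A_π(s, ·)] + γ E[W(s')] ≥ γ E[W(s')]`, and evaluating
this at a minimiser of `W` gives `min W ≥ γ min W`, hence `W ≥ 0` because `γ < 1`.
-/

lemma sigmoid_pos (x : ℝ) : 0 < sigmoid x := by
  unfold sigmoid; positivity

lemma div_two_le_sigmoid_mul_self (x : ℝ) : x / 2 ≤ sigmoid x * x := by
  have hden : 0 < 1 + Real.exp (-x) := by positivity
  rcases le_or_gt 0 x with hx | hx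
  · have : 1 / 2 ≤ sigmoid x := by
      rw [sigmoid, le_div_iff₀ hden]
      linarith [Real.exp_le_one_iff.mpr (neg_nonpos.mpr hx)]
    nlinarith
  · have : sigmoid x ≤ 1 / 2 := by
      rw [sigmoid, div_le_iff₀ hden]
      linarith [Real.one_le_exp (neg_nonneg.mpr hx.le)]
    nlinarith

section Reweighting

variable {ι : Type*} [Fintype ι]

lemma le_sum_mul_of_forall_le {w f : ι → ℝ} {m : ℝ} (hw : ∀ i, 0 ≤ w i)
    (hw1 : ∑ i, w i = 1) (hf : ∀ i, m ≤ f i) : m ≤ ∑ i, w i * f i :=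
  calc m = ∑ i, w i * m := by rw [← sum_mul, hw1, one_mul]
    _ ≤ ∑ i, w i * f i := sum_le_sum fun i _ => mul_le_mul_of_nonneg_left (hf i) (hw i)

lemma sum_mul_pos_of_sum_eq_one {p g : ι → ℝ} (hp : ∀ i, 0 ≤ p i) (hp1 : ∑ i, p i = 1)
    (hg : ∀ i, 0 < g i) : 0 < ∑ i, p i * g i := by
  obtain ⟨i, -, hi⟩ := exists_lt_of_sum_lt (s := univ) (f := 0) (g := p) (by simp [hp1])
  exact sum_pos' (fun j _ => mul_nonneg (hp j) (hg j).le) ⟨i, mem_univ i, mul_pos hi (hg i)⟩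

noncomputable def tilt (p g : ι → ℝ) (i : ι) : ℝ := p i * g i / ∑ j, p j * g j

lemma tilt_nonneg {p g : ι → ℝ} (hp : ∀ i, 0 ≤ p i) (hg : ∀ i, 0 ≤ g i) (i : ι) :
    0 ≤ tilt p g i :=
  div_nonneg (mul_nonneg (hp i) (hg i)) (sum_nonneg fun j _ => mul_nonneg (hp j) (hg j))

lemma sum_tilt {p g : ι → ℝ} (hp : ∀ i, 0 ≤ p i) (hp1 : ∑ i, p i = 1) (hg : ∀ i, 0 < g i) :
    ∑ i, tilt p g i = 1 := by
  simp only [tilt]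
  rw [← sum_div, div_self (sum_mul_pos_of_sum_eq_one hp hp1 hg).ne']

lemma sum_tilt_sigmoid_mul_nonneg {p x : ι → ℝ} (hp : ∀ i, 0 ≤ p i)
    (hx : ∑ i, p i * x i = 0) : 0 ≤ ∑ i, tilt p (fun j => sigmoid (x j)) i * x i := by
  have hnum : 0 ≤ ∑ i, p i * sigmoid (x i) * x i :=
    calc (0 : ℝ) = (∑ i, p i * x i) / 2 := by rw [hx, zero_div]
      _ = ∑ i, p i * (x i / 2) := by rw [sum_div]; simp only [mul_div_assoc]
      _ ≤ ∑ i, p i * sigmoid (x i) * x i := sum_le_sum fun i _ => by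
          rw [mul_assoc]; exact mul_le_mul_of_nonneg_left (div_two_le_sigmoid_mul_self _) (hp i)
  simp only [tilt, div_mul_eq_mul_div, ← sum_div]
  exact div_nonneg hnum (sum_nonneg fun i _ => mul_nonneg (hp i) (sigmoid_pos _).le)

end Reweighting

section MDP

variable {S A : Type*} [Fintype S] [Fintype A]

noncomputable def qValue (P : S → A → S → ℝ) (r : S → A → ℝ) (γ : ℝ) (V : S → ℝ) (s : S) (a : A) :
    ℝ :=
  r s a + γ * ∑ t, P s a t * V t

lemma bellman_sub {P : S → A → S → ℝ} {r : S → A → ℝ} {γ : ℝ} {q : S → A → ℝ} {s : S}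
    (hq : ∑ a, q s a = 1) (V V' : S → ℝ) (hV' : V' s = ∑ a, q s a * qValue P r γ V' s a) :
    V' s - V s = ∑ a, q s a * (qValue P r γ V s a - V s)
      + γ * ∑ a, q s a * ∑ t, P s a t * (V' t - V t) := by
  have hsplit : ∀ a, q s a * qValue P r γ V' s a = q s a * (qValue P r γ V s a - V s)
      + q s a * V s + γ * (q s a * ∑ t, P s a t * (V' t - V t)) := fun a => by
    simp only [qValue, mul_sub, sum_sub_distrib]; ring
  rw [hV', sum_congr rfl fun a _ => hsplit a, sum_add_distrib, sum_add_distrib, ← sum_mul,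
    ← mul_sum, hq]
  ring

lemma nonneg_of_discounted_supersolution {P : S → A → S → ℝ} {q : S → A → ℝ} {γ : ℝ}
    (hP : ∀ s a t, 0 ≤ P s a t) (hP1 : ∀ s a, ∑ t, P s a t = 1)
    (hq : ∀ s a, 0 ≤ q s a) (hq1 : ∀ s, ∑ a, q s a = 1) (hγ0 : 0 ≤ γ) (hγ1 : γ < 1)
    {W : S → ℝ} (hW : ∀ s, γ * ∑ a, q s a * ∑ t, P s a t * W t ≤ W s) (s : S) : 0 ≤ W s := by
  have : Nonempty S := ⟨s⟩
  obtain ⟨s₀, hs₀⟩ := Finite.exists_min W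
  have hmin : W s₀ ≤ ∑ a, q s₀ a * ∑ t, P s₀ a t * W t :=
    le_sum_mul_of_forall_le (hq s₀) (hq1 s₀) fun a =>
      le_sum_mul_of_forall_le (hP s₀ a) (hP1 s₀ a) hs₀
  have hdisc : γ * W s₀ ≤ W s₀ := (mul_le_mul_of_nonneg_left hmin hγ0).trans (hW s₀)
  have hmin_nonneg : 0 ≤ W s₀ := by nlinarith
  exact hmin_nonneg.trans (hs₀ s)

lemma le_of_bellman_of_advantage_nonneg {P : S → A → S → ℝ} {r : S → A → ℝ} {γ : ℝ}
    {q : S → A → ℝ} (hP : ∀ s a t, 0 ≤ P s a t) (hP1 : ∀ s a, ∑ t, P s a t = 1)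
    (hq : ∀ s a, 0 ≤ q s a) (hq1 : ∀ s, ∑ a, q s a = 1) (hγ0 : 0 ≤ γ) (hγ1 : γ < 1)
    {V V' : S → ℝ} (hadv : ∀ s, 0 ≤ ∑ a, q s a * (qValue P r γ V s a - V s))
    (hV' : ∀ s, V' s = ∑ a, q s a * qValue P r γ V' s a) (s : S) : V s ≤ V' s := by
  have hW : ∀ s, γ * ∑ a, q s a * ∑ t, P s a t * (V' t - V t) ≤ V' s - V s := fun s => by
    rw [bellman_sub (hq1 s) V V' (hV' s)]
    linarith [hadv s]
  exact sub_nonneg.mp (nonneg_of_discounted_supersolution hP hP1 hq hq1 hγ0 hγ1 hW s)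

lemma sum_mul_advantage_eq_zero {P : S → A → S → ℝ} {r : S → A → ℝ} {γ : ℝ}
    {π : S → A → ℝ} {V : S → ℝ} {s : S} (hπ1 : ∑ a, π s a = 1)
    (hV : V s = ∑ a, π s a * qValue P r γ V s a) :
    ∑ a, π s a * (qValue P r γ V s a - V s) = 0 := by
  simp only [mul_sub, sum_sub_distrib, ← sum_mul, hπ1, one_mul, ← hV, sub_self]

end MDP

theorem sag_policy_improvement_general
    {S A : Type*} [Fintype S] [Fintype A]
    (P : S → A → S → ℝ) (hP : ∀ s a s', 0 ≤ P s a s')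
    (hPsum : ∀ s a, ∑ s', P s a s' = 1)
    (r : S → A → ℝ) (γ : ℝ) (hγ0 : 0 ≤ γ) (hγ1 : γ < 1)
    (π : S → A → ℝ) (hπ : ∀ s a, 0 ≤ π s a) (hπsum : ∀ s, ∑ a, π s a = 1)
    (Vπ : S → ℝ)
    (hV : ∀ s, Vπ s = ∑ a, π s a * (r s a + γ * ∑ s', P s a s' * Vπ s'))
    (Aπ : S → A → ℝ)
    (hA : ∀ s a, Aπ s a = (r s a + γ * ∑ s', P s a s' * Vπ s') - Vπ s)
    (Z : S → ℝ) (hZ : ∀ s, Z s = ∑ a, π s a * sigmoid (Aπ s a))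
    (πσ : S → A → ℝ) (hπσ : ∀ s a, πσ s a = π s a * sigmoid (Aπ s a) / Z s) :
    (∀ s a, 0 ≤ πσ s a) ∧ (∀ s, ∑ a, πσ s a = 1) ∧
      ∀ V' : S → ℝ,
        (∀ s, V' s = ∑ a, πσ s a * (r s a + γ * ∑ s', P s a s' * V' s')) →
          (∀ s, Vπ s ≤ V' s) ∧
            ∀ ρ : S → ℝ, (∀ s, 0 ≤ ρ s) → (∑ s, ρ s = 1) →
              ∑ s, ρ s * Vπ s ≤ ∑ s, ρ s * V' s := by
  have hπσ_tilt : ∀ s, πσ s = tilt (π s) fun a => sigmoid (Aπ s a) := fun s => by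
    ext a; rw [hπσ, hZ]; rfl
  have hπσ0 : ∀ s a, 0 ≤ πσ s a := fun s a => by
    rw [hπσ_tilt]; exact tilt_nonneg (hπ s) (fun a => (sigmoid_pos _).le) a
  have hπσ1 : ∀ s, ∑ a, πσ s a = 1 := fun s => by
    rw [hπσ_tilt]; exact sum_tilt (hπ s) (hπsum s) fun a => sigmoid_pos _
  have hadv : ∀ s, 0 ≤ ∑ a, πσ s a * (qValue P r γ Vπ s a - Vπ s) := fun s => by
    have hmean := sum_mul_advantage_eq_zero (hπsum s) (hV s)
    simp only [qValue, ← hA] at hmean ⊢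
    rw [hπσ_tilt]
    exact sum_tilt_sigmoid_mul_nonneg (hπ s) hmean
  refine ⟨hπσ0, hπσ1, fun V' hV' => ?_⟩
  have hle : ∀ s, Vπ s ≤ V' s :=
    le_of_bellman_of_advantage_nonneg hP hPsum hπσ0 hπσ1 hγ0 hγ1 hadv hV'
  exact ⟨hle, fun ρ hρ _ => sum_le_sum fun s _ => mul_le_mul_of_nonneg_left (hle s) (hρ s)⟩

/-- SAG policy improvement (Proposition 1): in a finite MDP, the sigmoid-tilted
policy `π^σ(s,a) = π(s,a)·σ(A_π(s,a))/Z(s)` (with `Z(s) = Σ_a π(s,a)·σ(A_π(s,a))`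
and advantage `A_π(s,a) = Q_π(s,a) − V_π(s)`) is a policy, any solution `V'` of
its Bellman equation dominates `V_π` pointwise, and hence
`J(π^σ) = Σ_s ρ(s)·V'(s) ≥ Σ_s ρ(s)·V_π(s) = J(π)` for any initial
distribution `ρ`. -/
theorem sag_policy_improvement
    {S A : Type*} [Fintype S] [Fintype A] [Nonempty S] [Nonempty A]
    (P : S → A → S → ℝ) (hP : ∀ s a s', 0 ≤ P s a s')
    (hPsum : ∀ s a, ∑ s', P s a s' = 1)
    (r : S → A → ℝ) (γ : ℝ) (hγ0 : 0 ≤ γ) (hγ1 : γ < 1)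
    (π : S → A → ℝ) (hπ : ∀ s a, 0 ≤ π s a) (hπsum : ∀ s, ∑ a, π s a = 1)
    (Vπ : S → ℝ)
    (hV : ∀ s, Vπ s = ∑ a, π s a * (r s a + γ * ∑ s', P s a s' * Vπ s'))
    (Aπ : S → A → ℝ)
    (hA : ∀ s a, Aπ s a = (r s a + γ * ∑ s', P s a s' * Vπ s') - Vπ s)
    (Z : S → ℝ) (hZ : ∀ s, Z s = ∑ a, π s a * sigmoid (Aπ s a))
    (πσ : S → A → ℝ) (hπσ : ∀ s a, πσ s a = π s a * sigmoid (Aπ s a) / Z s) :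
    (∀ s a, 0 ≤ πσ s a) ∧ (∀ s, ∑ a, πσ s a = 1) ∧
      ∀ V' : S → ℝ,
        (∀ s, V' s = ∑ a, πσ s a * (r s a + γ * ∑ s', P s a s' * V' s')) →
          (∀ s, Vπ s ≤ V' s) ∧
            ∀ ρ : S → ℝ, (∀ s, 0 ≤ ρ s) → (∑ s, ρ s = 1) →
              ∑ s, ρ s * Vπ s ≤ ∑ s, ρ s * V' s :=
  sag_policy_improvement_general P hP hPsum r γ hγ0 hγ1 π hπ hπsum Vπ hV Aπ hA Z hZ πσ hπσ
end

section
/- Consider a finite Markov decision process: a nonempty finite state space S, a nonempty finite action space A, a transition function P : S × A × S → ℝ with P(s,a,s') ≥ 0 and Σ_{s'∈S} P(s,a,s') = 1 for all (s,a), a reward function r : S × A → ℝ, and a discount factor γ ∈ [0,1). Let π be a policy (π(s,a) ≥ 0, Σ_a π(s,a) = 1 for all s) and let V_π : S → ℝ satisfy the Bellman equation V_π(s) = Σ_a π(s,a)·( r(s,a) + γ·Σ_{s'} P(s,a,s')·V_π(s') ). Define Q_π(s,a) = r(s,a) + γ·Σ_{s'} P(s,a,s')·V_π(s'), A_π(s,a)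 = Q_π(s,a) − V_π(s), Z(s) = Σ_a π(s,a)·exp(A_π(s,a)), and π^exp(s,a) = π(s,a)·exp(A_π(s,a))/Z(s). Then π^exp is a policy, and if V' : S → ℝ satisfies the Bellman equation for π^exp, then V'(s) ≥ V_π(s) for all s ∈ S; consequently, for any initial distribution ρ : S → ℝ with ρ(s) ≥ 0 and Σ_s ρ(s) = 1, the policy values satisfy J(π^exp) = Σ_s ρ(s)·V'(s) ≥ Σ_s ρ(s)·V_π(s) = J(π). -/
/-!
The advantage of `π` has `π`-mean zero. Since `x ≤ x · eˣ` for every real `x`, its mean under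
the tilted weights `π · e^A / Z` is at least that, i.e. nonnegative, which says exactly that one
Bellman step for `π^exp` does not decrease `V_π`. A comparison principle for the `γ`-contracting,
monotone Bellman operator of `π^exp` upgrades this to `V_π ≤ V'`: at a minimiser of `V' - V_π`
the minimum `m` satisfies `m ≥ γ m`, hence `m ≥ 0`.
-/

open Finset

lemma le_sum_mul_of_mem_stdSimplex {ι : Type*} [Fintype ι] {w f : ι → ℝ}
    (hw : w ∈ stdSimplex ℝ ι) {c : ℝ} (hc : ∀ i, c ≤ f i) : c ≤ ∑ i, w i * f i :=
  calc c = ∑ i, w i * c := by rw [← sum_mul, hw.2, one_mul]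
    _ ≤ ∑ i, w i * f i := sum_le_sum fun i _ => mul_le_mul_of_nonneg_left (hc i) (hw.1 i)

lemma Real.self_le_mul_exp (x : ℝ) : x ≤ x * Real.exp x := by
  rcases le_total 0 x with hx | hx
  · nlinarith [Real.one_le_exp hx]
  · nlinarith [Real.exp_le_one_iff.mpr hx]

section ExpTilt

variable {ι : Type*} [Fintype ι]

noncomputable def expTilt (w f : ι → ℝ) (i : ι) : ℝ :=
  w i * Real.exp (f i) / ∑ j, w j * Real.exp (f j)

lemma expTilt_mem_stdSimplex {w : ι → ℝ} (hw : w ∈ stdSimplex ℝ ι) (f : ι → ℝ) :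
    expTilt w f ∈ stdSimplex ℝ ι := by
  have hZ : 0 < ∑ j, w j * Real.exp (f j) := by
    obtain ⟨i, -, hi⟩ := exists_lt_of_sum_lt (s := univ) (f := 0) (g := w) (by simp [hw.2])
    exact sum_pos' (fun j _ => mul_nonneg (hw.1 j) (Real.exp_pos _).le)
      ⟨i, mem_univ i, mul_pos hi (Real.exp_pos _)⟩
  refine ⟨fun i => div_nonneg (mul_nonneg (hw.1 i) (Real.exp_pos _).le) hZ.le, ?_⟩
  simp only [expTilt, ← sum_div, div_self hZ.ne']

lemma sum_expTilt_mul_nonneg {w f : ι → ℝ} (hw : ∀ i, 0 ≤ w i) (hf : ∑ i, w i * f i = 0) :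
    0 ≤ ∑ i, expTilt w f i * f i := by
  simp only [expTilt, div_mul_eq_mul_div, ← sum_div]
  refine div_nonneg ?_ (sum_nonneg fun i _ => mul_nonneg (hw i) (Real.exp_pos _).le)
  calc 0 = ∑ i, w i * f i := hf.symm
    _ ≤ ∑ i, w i * Real.exp (f i) * f i := sum_le_sum fun i _ => by
        rw [mul_assoc, mul_comm (Real.exp _)]
        exact mul_le_mul_of_nonneg_left (Real.self_le_mul_exp _) (hw i)

end ExpTilt

namespace FiniteMDP

variable {S A : Type*} [Fintype S] [Fintype A]
  (P : S → A → S → ℝ) (r : S → A → ℝ) (γ : ℝ)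

def qValue (V : S → ℝ) (s : S) (a : A) : ℝ :=
  r s a + γ * ∑ s', P s a s' * V s'

def bellman (π : S → A → ℝ) (V : S → ℝ) (s : S) : ℝ :=
  ∑ a, π s a * qValue P r γ V s a

variable {P r γ}

lemma sum_mul_qValue_sub_eq_zero {π : S → A → ℝ} {V : S → ℝ} {s : S}
    (hπ : ∑ a, π s a = 1) (hV : V s = bellman P r γ π V s) :
    ∑ a, π s a * (qValue P r γ V s a - V s) = 0 := by
  simp only [mul_sub, sum_sub_distrib, ← sum_mul, hπ, one_mul, bellman] at hV ⊢
  rw [← hV, sub_self]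

lemma bellman_eq_add_sum_mul_qValue_sub {π : S → A → ℝ} {V : S → ℝ} {s : S}
    (hπ : ∑ a, π s a = 1) :
    bellman P r γ π V s = V s + ∑ a, π s a * (qValue P r γ V s a - V s) := by
  simp only [bellman, mul_sub, sum_sub_distrib, ← sum_mul, hπ, one_mul, add_sub_cancel]

lemma mul_le_bellman_sub_bellman {π : S → A → ℝ} {U V : S → ℝ} {c : ℝ}
    (hP : ∀ s a, P s a ∈ stdSimplex ℝ S) (hπ : ∀ s, π s ∈ stdSimplex ℝ A) (hγ : 0 ≤ γ)
    (hc : ∀ s, c ≤ U s - V s) (s : S) :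
    γ * c ≤ bellman P r γ π U s - bellman P r γ π V s := by
  have hdiff : bellman P r γ π U s - bellman P r γ π V s
      = ∑ a, π s a * (γ * ∑ s', P s a s' * (U s' - V s')) := by
    rw [bellman, bellman, ← sum_sub_distrib]
    refine sum_congr rfl fun a _ => ?_
    simp only [qValue, mul_sub, sum_sub_distrib]
    ring
  rw [hdiff]
  exact le_sum_mul_of_mem_stdSimplex (hπ s) fun a =>
    mul_le_mul_of_nonneg_left (le_sum_mul_of_mem_stdSimplex (hP s a) hc) hγ

theorem le_of_le_bellman_of_bellman_le {π : S → A → ℝ} {U V : S → ℝ}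
    (hP : ∀ s a, P s a ∈ stdSimplex ℝ S) (hπ : ∀ s, π s ∈ stdSimplex ℝ A)
    (hγ₀ : 0 ≤ γ) (hγ₁ : γ < 1)
    (hV : V ≤ bellman P r γ π V) (hU : bellman P r γ π U ≤ U) : V ≤ U := by
  intro s
  have : Nonempty S := ⟨s⟩
  obtain ⟨s₀, hs₀⟩ := Finite.exists_min fun s => U s - V s
  have hstep := mul_le_bellman_sub_bellman (r := r) hP hπ hγ₀ hs₀ s₀
  have hmin : 0 ≤ U s₀ - V s₀ := by nlinarith [hV s₀, hU s₀]
  linarith [hs₀ s]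

end FiniteMDP

open FiniteMDP in
theorem eag_policy_improvement_general
    {S A : Type*} [Fintype S] [Fintype A]
    (P : S → A → S → ℝ) (hP : ∀ s a s', 0 ≤ P s a s')
    (hPsum : ∀ s a, ∑ s', P s a s' = 1)
    (r : S → A → ℝ) (γ : ℝ) (hγ0 : 0 ≤ γ) (hγ1 : γ < 1)
    (π : S → A → ℝ) (hπ : ∀ s a, 0 ≤ π s a) (hπsum : ∀ s, ∑ a, π s a = 1)
    (Vπ : S → ℝ)
    (hV : ∀ s, Vπ s = ∑ a, π s a * (r s a + γ * ∑ s', P s a s' * Vπ s'))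
    (Aπ : S → A → ℝ)
    (hA : ∀ s a, Aπ s a = (r s a + γ * ∑ s', P s a s' * Vπ s') - Vπ s)
    (Z : S → ℝ) (hZ : ∀ s, Z s = ∑ a, π s a * Real.exp (Aπ s a))
    (πexp : S → A → ℝ) (hπexp : ∀ s a, πexp s a = π s a * Real.exp (Aπ s a) / Z s) :
    (∀ s a, 0 ≤ πexp s a) ∧ (∀ s, ∑ a, πexp s a = 1) ∧
      ∀ V' : S → ℝ,
        (∀ s, V' s = ∑ a, πexp s a * (r s a + γ * ∑ s', P s a s' * V' s')) →
          (∀ s, Vπ s ≤ V' s) ∧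
            ∀ ρ : S → ℝ, (∀ s, 0 ≤ ρ s) → (∑ s, ρ s = 1) →
              ∑ s, ρ s * Vπ s ≤ ∑ s, ρ s * V' s := by
  have hπexp_tilt (s : S) : πexp s = expTilt (π s) (Aπ s) :=
    funext fun a => by rw [hπexp, hZ]; rfl
  have hπexp_mem (s : S) : πexp s ∈ stdSimplex ℝ A :=
    hπexp_tilt s ▸ expTilt_mem_stdSimplex ⟨hπ s, hπsum s⟩ (Aπ s)
  refine ⟨fun s => (hπexp_mem s).1, fun s => (hπexp_mem s).2, fun V' hV' => ?_⟩
  have hadv_mean (s : S) : ∑ a, π s a * Aπ s a = 0 := by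
    simp only [hA]
    exact sum_mul_qValue_sub_eq_zero (hπsum s) (hV s)
  have himprove : Vπ ≤ bellman P r γ πexp Vπ := fun s => by
    have hgain := sum_expTilt_mul_nonneg (hπ s) (hadv_mean s)
    simp only [← hπexp_tilt s, hA] at hgain
    rw [bellman_eq_add_sum_mul_qValue_sub (hπexp_mem s).2]
    exact le_add_of_nonneg_right hgain
  have hdom : Vπ ≤ V' := le_of_le_bellman_of_bellman_le (fun s a => ⟨hP s a, hPsum s a⟩)
    hπexp_mem hγ0 hγ1 himprove fun s => (hV' s).ge
  exact ⟨hdom, fun ρ hρ _ => sum_le_sum fun s _ => mul_le_mul_of_nonneg_left (hdom s) (hρ s)⟩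

/-- EAG policy improvement (Proposition 2): in a finite MDP, the exponentially
tilted policy `π^exp(s,a) = π(s,a)·exp(A_π(s,a))/Z(s)` (with
`Z(s) = Σ_a π(s,a)·exp(A_π(s,a))` and advantage `A_π(s,a) = Q_π(s,a) − V_π(s)`)
is a policy, any solution `V'` of its Bellman equation dominates `V_π`
pointwise, and hence `J(π^exp) = Σ_s ρ(s)·V'(s) ≥ Σ_s ρ(s)·V_π(s) = J(π)` for
any initial distribution `ρ`. -/
theorem eag_policy_improvement
    {S A : Type*} [Fintype S] [Fintype A] [Nonempty S] [Nonempty A]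
    (P : S → A → S → ℝ) (hP : ∀ s a s', 0 ≤ P s a s')
    (hPsum : ∀ s a, ∑ s', P s a s' = 1)
    (r : S → A → ℝ) (γ : ℝ) (hγ0 : 0 ≤ γ) (hγ1 : γ < 1)
    (π : S → A → ℝ) (hπ : ∀ s a, 0 ≤ π s a) (hπsum : ∀ s, ∑ a, π s a = 1)
    (Vπ : S → ℝ)
    (hV : ∀ s, Vπ s = ∑ a, π s a * (r s a + γ * ∑ s', P s a s' * Vπ s'))
    (Aπ : S → A → ℝ)
    (hA : ∀ s a, Aπ s a = (r s a + γ * ∑ s', P s a s' * Vπ s') - Vπ s)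
    (Z : S → ℝ) (hZ : ∀ s, Z s = ∑ a, π s a * Real.exp (Aπ s a))
    (πexp : S → A → ℝ) (hπexp : ∀ s a, πexp s a = π s a * Real.exp (Aπ s a) / Z s) :
    (∀ s a, 0 ≤ πexp s a) ∧ (∀ s, ∑ a, πexp s a = 1) ∧
      ∀ V' : S → ℝ,
        (∀ s, V' s = ∑ a, πexp s a * (r s a + γ * ∑ s', P s a s' * V' s')) →
          (∀ s, Vπ s ≤ V' s) ∧
            ∀ ρ : S → ℝ, (∀ s, 0 ≤ ρ s) → (∑ s, ρ s = 1) →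
              ∑ s, ρ s * Vπ s ≤ ∑ s, ρ s * V' s :=
  eag_policy_improvement_general P hP hPsum r γ hγ0 hγ1 π hπ hπsum Vπ hV Aπ hA Z hZ πexp hπexp
end
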